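/- The set of d×h ΔV matrices (functions Fin d → Fin h → ℝ≥0∞) equipped with the generalized summation ⊕ forms a semigroup: ⊕ is a well-defined closed binary operation and is associative. -/

import Mathlib

set_option maxHeartbeats 1000000


open scoped ENNReal

/-- Generalized summation of ΔV matrices (1-based math indices encoded as 0-based `Fin`). -/
noncomputable def oplus {d h : ℕ} (A B : Fin d → Fin h → ℝ≥0∞) (i : Fin d) (j : Fin h) : ℝ≥0∞ :=
  sInf { x | ∃ k : ℕ, ∃ (h1 : 1 ≤ k) (h2 : k ≤ i.val) (h3 : j.val + k < h),
    x = A ⟨k - 1, by have := i.isLt; omega⟩ j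
      + B ⟨i.val - k, by have := i.isLt; omega⟩ ⟨j.val + k, h3⟩ }

lemma oplus_le {d h : ℕ} (A B : Fin d → Fin h → ℝ≥0∞) (i : Fin d) (j : Fin h)
    (k : ℕ) (h1 : 1 ≤ k) (h2 : k ≤ i.val) (h3 : j.val + k < h) :
    oplus A B i j ≤ A ⟨k - 1, by have := i.isLt; omega⟩ j
      + B ⟨i.val - k, by have := i.isLt; omega⟩ ⟨j.val + k, h3⟩ :=
  sInf_le ⟨k, h1, h2, h3, rfl⟩

lemma oplus_assoc {d h : ℕ} (A B C : Fin d → Fin h → ℝ≥0∞) :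
    oplus (oplus A B) C = oplus A (oplus B C) := by
  funext i j
  have hi := i.isLt
  have hj := j.isLt
  apply le_antisymm
  · apply le_sInf
    rintro x ⟨k, h1, h2, h3, rfl⟩
    rw [add_comm]
    conv_rhs => rw [oplus, ENNReal.sInf_add]
    apply le_iInf₂
    rintro b ⟨l, g1, g2, g3, rfl⟩
    have g2' : l ≤ i.val - k := g2
    have g3' : j.val + k + l < h := g3
    calc oplus (oplus A B) C i j
        ≤ oplus A B ⟨k + l - 1, by omega⟩ j
            + C ⟨i.val - (k + l), by omega⟩ ⟨j.val + (k + l), by omega⟩ :=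
          oplus_le _ _ _ _ (k + l) (by omega) (by omega) (by omega)
      _ ≤ (A ⟨k - 1, by omega⟩ j + B ⟨(k + l - 1) - k, by omega⟩ ⟨j.val + k, by omega⟩)
            + C ⟨i.val - (k + l), by omega⟩ ⟨j.val + (k + l), by omega⟩ :=
          add_le_add_left (oplus_le A B ⟨k + l - 1, by omega⟩ j k h1
            (by show k ≤ k + l - 1; omega) (by omega)) _
      _ = _ := by
          have e1 : ((⟨(k + l - 1) - k, by omega⟩ : Fin d)) = ⟨l - 1, by omega⟩ :=
            Fin.mk_eq_mk.mpr (by omega)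
          have e2 : ((⟨i.val - (k + l), by omega⟩ : Fin d)) = ⟨(i.val - k) - l, by omega⟩ :=
            Fin.mk_eq_mk.mpr (by omega)
          have e3 : ((⟨j.val + (k + l), by omega⟩ : Fin h)) = ⟨(j.val + k) + l, by omega⟩ :=
            Fin.mk_eq_mk.mpr (by omega)
          rw [e1, e2, e3]; ring
  · apply le_sInf
    rintro x ⟨m, h1, h2, h3, rfl⟩
    conv_rhs => rw [oplus, ENNReal.sInf_add]
    apply le_iInf₂
    rintro b ⟨k, g1, g2, g3, rfl⟩
    have g2' : k ≤ m - 1 := g2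
    have g3' : j.val + k < h := g3
    calc oplus A (oplus B C) i j
        ≤ A ⟨k - 1, by omega⟩ j + oplus B C ⟨i.val - k, by omega⟩ ⟨j.val + k, by omega⟩ :=
          oplus_le _ _ _ _ k g1 (by omega) (by omega)
      _ ≤ A ⟨k - 1, by omega⟩ j
            + (B ⟨(m - k) - 1, by omega⟩ ⟨j.val + k, by omega⟩
               + C ⟨(i.val - k) - (m - k), by omega⟩ ⟨(j.val + k) + (m - k), by omega⟩) :=
          add_le_add_right (oplus_le B C ⟨i.val - k, by omega⟩ ⟨j.val + k, by omega⟩ (m - k)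
            (by omega) (by show m - k ≤ i.val - k; omega)
            (by show (j.val + k) + (m - k) < h; omega)) _
      _ = _ := by
          have e1 : ((⟨(m - k) - 1, by omega⟩ : Fin d)) = ⟨(m - 1) - k, by omega⟩ :=
            Fin.mk_eq_mk.mpr (by omega)
          have e2 : ((⟨(i.val - k) - (m - k), by omega⟩ : Fin d)) = ⟨i.val - m, by omega⟩ :=
            Fin.mk_eq_mk.mpr (by omega)
          have e3 : ((⟨(j.val + k) + (m - k), by omega⟩ : Fin h)) = ⟨j.val + m, by omega⟩ :=
            Fin.mk_eq_mk.mpr (by omega)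
          rw [e1, e2, e3]; ring

theorem oplus_semigroup {d h : ℕ} (hd : 0 < d) (hh : 0 < h) :
    ∃ s : Semigroup (Fin d → Fin h → ℝ≥0∞),
      ∀ A B : Fin d → Fin h → ℝ≥0∞, s.toMul.mul A B = oplus A B := by
  exact ⟨{ mul := oplus, mul_assoc := oplus_assoc }, fun A B => rfl⟩
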